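/- Let L = ⟨a,b,c⟩ = ax²+by²+cz² with positive integers a ≤ b ≤ c and gcd(a,b,c)=1 be a diagonal stable odd-regular ternary quadratic form, let T be the set of odd primes p at which L is anisotropic over ℤ_p, and let α ∈ {1,3,5,7} be such that 8n+α is represented by L over ℤ₂ for every nonnegative integer n. Let t_α be the number of elements of T congruent to α modulo 8, and let h ≥ t_α be an integer. Then: (i) for any integer s > h, at least s−h of the primes q_{α,1}, …, q_{α,s} are represented by L over ℤ; (ii) a ≤ q_{α,h+1} and b ≤ q_{α,h+2}; (iii) if a = 1, then b ≤ q_{α,h+1}; (iv) if s is an integer such that for every pair (i,j) with 1 ≤ i ≤ q_{α,h+1} and i ≤ j ≤ q_{α,h+2} for which ix²+jy² is not P(8,α)-universal, the number of indices k with 1 ≤ k ≤ s and q_{α,k} represented by ix²+jy² over ℤ is strictly less than s−h, then either ax²+by² is P(8,α)-universal or c ≤ q_{α,s}. -/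

import Mathlib

/-- `n` is represented by the diagonal form `a x² + b y² + c z²` over `ℤ_p`. -/
def ReprAt (p : ℕ) (hp : p.Prime) (a b c n : ℤ) : Prop :=
  letI : Fact p.Prime := ⟨hp⟩
  ∃ x y z : ℤ_[p], (a : ℤ_[p]) * x ^ 2 + (b : ℤ_[p]) * y ^ 2 + (c : ℤ_[p]) * z ^ 2 = (n : ℤ_[p])

/-- `n` is represented by `a x² + b y² + c z²` over `ℤ`. -/
def ReprZ (a b c n : ℤ) : Prop :=
  ∃ x y z : ℤ, a * x ^ 2 + b * y ^ 2 + c * z ^ 2 = n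

/-- The diagonal ternary form `⟨a,b,c⟩` is odd-regular. -/
def OddRegular (a b c : ℤ) : Prop :=
  ∀ n : ℤ, 0 < n → Odd n → (∀ (p : ℕ) (hp : p.Prime), ReprAt p hp a b c n) → ReprZ a b c n

/-- The diagonal ternary form `⟨a,b,c⟩` is regular. -/
def Regular (a b c : ℤ) : Prop :=
  ∀ n : ℤ, 0 < n → (∀ (p : ℕ) (hp : p.Prime), ReprAt p hp a b c n) → ReprZ a b c n

/-- Value of the diagonal form on a vector. -/
def Qdiag {R : Type*} [CommRing R] (a b c : ℤ) (v : Fin 3 → R) : R :=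
  (a : R) * v 0 ^ 2 + (b : R) * v 1 ^ 2 + (c : R) * v 2 ^ 2

/-- Polar bilinear form of the diagonal form. -/
def Bdiag {R : Type*} [CommRing R] (a b c : ℤ) (u v : Fin 3 → R) : R :=
  (a : R) * u 0 * v 0 + (b : R) * u 1 * v 1 + (c : R) * u 2 * v 2

/-- The diagonal ternary form `⟨a,b,c⟩` is `p`-stable for the odd prime `p`. -/
def PStable (p : ℕ) (hp : p.Prime) (a b c : ℤ) : Prop :=
  letI : Fact p.Prime := ⟨hp⟩
  (∃ u v : Fin 3 → ℤ_[p], Qdiag a b c u = 1 ∧ Qdiag a b c v = -1 ∧ Bdiag a b c u v = 0) ∨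
  (∃ Δ ε : ℤ_[p], IsUnit Δ ∧ (¬ ∃ t : ℤ_[p], t ^ 2 = Δ) ∧ IsUnit ε ∧
    ∃ U : Matrix (Fin 3) (Fin 3) ℤ_[p], IsUnit U.det ∧
      ∀ x : Fin 3 → ℤ_[p],
        Qdiag a b c (U.mulVec x) = x 0 ^ 2 - Δ * x 1 ^ 2 + (p : ℤ_[p]) * ε * x 2 ^ 2)

/-- The diagonal ternary form `⟨a,b,c⟩` is stable. -/
def Stable (a b c : ℤ) : Prop :=
  ∀ (p : ℕ) (hp : p.Prime), p ≠ 2 → PStable p hp a b c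

/-- The diagonal ternary form `⟨a,b,c⟩` is anisotropic over `ℤ_p`. -/
def AnisotropicAt (p : ℕ) (hp : p.Prime) (a b c : ℤ) : Prop :=
  letI : Fact p.Prime := ⟨hp⟩
  ∀ v : Fin 3 → ℤ_[p], Qdiag a b c v = 0 → v = 0

/-- `q8 η i` is the `i`-th smallest prime congruent to `η` modulo `8` (1-indexed). -/
noncomputable def q8 (η i : ℕ) : ℕ :=
  Nat.nth (fun p => p.Prime ∧ p % 8 = η) (i - 1)

/-- The diagonal binary form `i x² + j y²` is `P(8,η)`-universal. -/
def P8Univ (η : ℕ) (i j : ℤ) : Prop :=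
  ∀ q : ℕ, q.Prime → q % 8 = η → ∃ x y : ℤ, i * x ^ 2 + j * y ^ 2 = (q : ℤ)


-- ===================== auxiliary lemmas =====================

lemma padic_unit_of_toZMod_ne_zero {p : ℕ} [Fact p.Prime] {x : ℤ_[p]}
    (hx : PadicInt.toZMod x ≠ 0) : IsUnit x := by
  rw [PadicInt.isUnit_iff]
  rcases lt_or_eq_of_le (PadicInt.norm_le_one x) with h | h
  · exfalso
    apply hx
    have : x ∈ RingHom.ker (PadicInt.toZMod : ℤ_[p] →+* ZMod p) := by
      rw [PadicInt.ker_toZMod, PadicInt.maximalIdeal_eq_span_p, Ideal.mem_span_singleton]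
      exact (PadicInt.norm_lt_one_iff_dvd x).mp h
    exact this
  · exact h

lemma padic_toZMod_eq_zero_iff_dvd {p : ℕ} [Fact p.Prime] (x : ℤ_[p]) :
    PadicInt.toZMod x = 0 ↔ (p : ℤ_[p]) ∣ x := by
  have : (PadicInt.toZMod x = 0) ↔ x ∈ RingHom.ker (PadicInt.toZMod : ℤ_[p] →+* ZMod p) :=
    Iff.rfl
  rw [this, PadicInt.ker_toZMod, PadicInt.maximalIdeal_eq_span_p, Ideal.mem_span_singleton]

lemma padic_natCast_unit {p : ℕ} [Fact p.Prime] (q : ℕ) (hq : ¬ p ∣ q) :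
    IsUnit (q : ℤ_[p]) := by
  apply padic_unit_of_toZMod_ne_zero
  rw [map_natCast, Ne, ZMod.natCast_eq_zero_iff]
  exact hq

lemma padic_two_unit {p : ℕ} [Fact p.Prime] (hp2 : p ≠ 2) : IsUnit (2 : ℤ_[p]) := by
  have := padic_natCast_unit (p := p) 2 (by
    intro hdvd
    exact hp2 ((Nat.prime_dvd_prime_iff_eq Fact.out Nat.prime_two).mp hdvd))
  simpa using this

lemma padic_sqrt {p : ℕ} [Fact p.Prime] (hp2 : p ≠ 2) {m r : ℤ_[p]}
    (hr : IsUnit r) (h : PadicInt.toZMod (r ^ 2) = PadicInt.toZMod m) :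
    ∃ s : ℤ_[p], s ^ 2 = m := by
  have h2 : IsUnit (2 : ℤ_[p]) := padic_two_unit hp2
  set F : Polynomial ℤ_[p] := Polynomial.X ^ 2 - Polynomial.C m with hF
  have hFr : F.eval r = r ^ 2 - m := by simp [hF]
  have hFd : F.derivative.eval r = 2 * r := by
    simp [hF, Polynomial.derivative_sub, Polynomial.derivative_X_pow, one_add_one_eq_two]
  have hnorm : ‖F.eval r‖ < ‖F.derivative.eval r‖ ^ 2 := by
    rw [hFr, hFd]
    have h2r : ‖(2 : ℤ_[p]) * r‖ = 1 := PadicInt.isUnit_iff.mp (h2.mul hr)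
    rw [h2r, one_pow]
    rw [PadicInt.norm_lt_one_iff_dvd]
    rw [← padic_toZMod_eq_zero_iff_dvd]
    rw [map_sub, h, sub_self]
  obtain ⟨z, hz, -⟩ := hensels_lemma hnorm
  refine ⟨z, ?_⟩
  have : z ^ 2 - m = 0 := by simpa [hF] using hz
  exact sub_eq_zero.mp this

lemma zmod_lift_toZMod {p : ℕ} [Fact p.Prime] (a : ZMod p) :
    PadicInt.toZMod ((a.val : ℤ_[p])) = a := by
  rw [map_natCast, ZMod.natCast_zmod_val]

lemma padic_binary_unit {p : ℕ} [Fact p.Prime] (hp2 : p ≠ 2) {Δ n : ℤ_[p]}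
    (hΔ : IsUnit Δ) (hn : IsUnit n) :
    ∃ x y : ℤ_[p], x ^ 2 - Δ * y ^ 2 = n := by
  classical
  set Δ' : ZMod p := PadicInt.toZMod Δ with hΔ'
  set n' : ZMod p := PadicInt.toZMod n with hn'
  have hΔ'0 : Δ' ≠ 0 := by
    have := hΔ.map (PadicInt.toZMod (p := p))
    exact this.ne_zero
  have hn'0 : n' ≠ 0 := (hn.map (PadicInt.toZMod (p := p))).ne_zero
  have hcard : Fintype.card (ZMod p) % 2 = 1 := by
    rw [ZMod.card]
    have : p ≠ 2 := hp2
    rcases (Fact.out : p.Prime).eq_two_or_odd with h | h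
    · exact absurd h this
    · exact h
  obtain ⟨A, B, hAB⟩ := FiniteField.exists_root_sum_quadratic
    (f := Polynomial.X ^ 2 - Polynomial.C n')
    (g := Polynomial.C (-Δ') * Polynomial.X ^ 2)
    (by rw [Polynomial.degree_X_pow_sub_C (by norm_num) n']; norm_cast)
    (by rw [Polynomial.degree_C_mul_X_pow _ (neg_ne_zero.mpr hΔ'0)]; norm_num)
    hcard
  have hkey : A ^ 2 - Δ' * B ^ 2 = n' := by
    simp only [Polynomial.eval_add, Polynomial.eval_sub, Polynomial.eval_pow,
      Polynomial.eval_X, Polynomial.eval_C, Polynomial.eval_mul] at hAB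
    linear_combination hAB
  set x0 : ℤ_[p] := (A.val : ℤ_[p]) with hx0
  set y0 : ℤ_[p] := (B.val : ℤ_[p]) with hy0
  have hx0' : PadicInt.toZMod x0 = A := zmod_lift_toZMod A
  have hy0' : PadicInt.toZMod y0 = B := zmod_lift_toZMod B
  by_cases hA : A = 0
  · have hB : B ≠ 0 := by
      intro hB0
      rw [hA, hB0] at hkey
      simp at hkey
      exact hn'0 hkey.symm
    obtain ⟨u, hu⟩ := hΔ.exists_right_inv
    have hres : PadicInt.toZMod (y0 ^ 2) = PadicInt.toZMod (-n * u) := by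
      have hu' : Δ' * PadicInt.toZMod u = 1 := by
        rw [hΔ', ← map_mul, hu, map_one]
      rw [map_pow, hy0', map_mul, map_neg]
      have : Δ' * B ^ 2 = -n' := by rw [hA] at hkey; linear_combination -hkey
      calc B ^ 2 = (Δ' * PadicInt.toZMod u) * B ^ 2 := by rw [hu', one_mul]
        _ = -n' * PadicInt.toZMod u := by rw [← this]; ring
        _ = -PadicInt.toZMod n * PadicInt.toZMod u := rfl
    have hy0u : IsUnit y0 := padic_unit_of_toZMod_ne_zero (by rw [hy0']; exact hB)
    obtain ⟨s, hs⟩ := padic_sqrt hp2 hy0u hres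
    refine ⟨0, s, ?_⟩
    have : Δ * s ^ 2 = Δ * (-n * u) := by rw [hs]
    calc (0:ℤ_[p]) ^ 2 - Δ * s ^ 2 = -(Δ * s^2) := by ring
      _ = -(Δ * (-n * u)) := by rw [this]
      _ = n * (Δ * u) := by ring
      _ = n := by rw [hu, mul_one]
  · have hres : PadicInt.toZMod (x0 ^ 2) = PadicInt.toZMod (n + Δ * y0 ^ 2) := by
      rw [map_pow, hx0', map_add, map_mul, map_pow, hy0']
      rw [← hn', ← hΔ']
      linear_combination hkey
    have hx0u : IsUnit x0 := padic_unit_of_toZMod_ne_zero (by rw [hx0']; exact hA)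
    obtain ⟨s, hs⟩ := padic_sqrt hp2 hx0u hres
    exact ⟨s, y0, by rw [hs]; ring⟩

lemma case1_repr {p : ℕ} [Fact p.Prime] (hp2 : p ≠ 2) {a b c : ℤ}
    (H : ∃ u v : Fin 3 → ℤ_[p], Qdiag a b c u = 1 ∧ Qdiag a b c v = -1 ∧ Bdiag a b c u v = 0)
    (n : ℤ_[p]) :
    ∃ x y z : ℤ_[p], (a : ℤ_[p]) * x ^ 2 + (b : ℤ_[p]) * y ^ 2 + (c : ℤ_[p]) * z ^ 2 = n := by
  obtain ⟨u, v, hu, hv, huv⟩ := H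
  obtain ⟨t, ht⟩ := (padic_two_unit hp2).exists_right_inv
  set X : ℤ_[p] := t * (n + 1) with hX
  set Y : ℤ_[p] := t * (n - 1) with hY
  refine ⟨X * u 0 + Y * v 0, X * u 1 + Y * v 1, X * u 2 + Y * v 2, ?_⟩
  simp only [Qdiag, Bdiag] at hu hv huv
  linear_combination X^2 * hu + Y^2 * hv + 2*X*Y * huv + n * (2*t + 1) * ht

lemma case2_repr {p : ℕ} [Fact p.Prime] (hp2 : p ≠ 2) {a b c : ℤ} {Δ ε : ℤ_[p]}
    (hΔ : IsUnit Δ) (hε : IsUnit ε)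
    {U : Matrix (Fin 3) (Fin 3) ℤ_[p]}
    (hU : ∀ x : Fin 3 → ℤ_[p],
      Qdiag a b c (U.mulVec x) = x 0 ^ 2 - Δ * x 1 ^ 2 + (p : ℤ_[p]) * ε * x 2 ^ 2)
    {n : ℤ_[p]} (hn : IsUnit n) :
    ∃ x y z : ℤ_[p], (a : ℤ_[p]) * x ^ 2 + (b : ℤ_[p]) * y ^ 2 + (c : ℤ_[p]) * z ^ 2 = n := by
  obtain ⟨X, Y, hXY⟩ := padic_binary_unit hp2 hΔ hn
  set w : Fin 3 → ℤ_[p] := U.mulVec ![X, Y, 0] with hw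
  refine ⟨w 0, w 1, w 2, ?_⟩
  have := hU ![X, Y, 0]
  rw [← hw] at this
  simp only [Qdiag, Matrix.cons_val_zero, Matrix.cons_val_one, Matrix.head_cons,
    Matrix.cons_val_two, Matrix.tail_cons] at this ⊢
  rw [this]
  simpa using hXY

lemma step_dvd {p : ℕ} [Fact p.Prime] (hp2 : p ≠ 2) {Δ ε : ℤ_[p]}
    (hΔ : IsUnit Δ) (hΔns : ¬ ∃ t : ℤ_[p], t ^ 2 = Δ) (hε : IsUnit ε)
    {y0 y1 y2 : ℤ_[p]} (heq : y0 ^ 2 - Δ * y1 ^ 2 + (p : ℤ_[p]) * ε * y2 ^ 2 = 0) :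
    (p : ℤ_[p]) ∣ y0 ∧ (p : ℤ_[p]) ∣ y1 ∧ (p : ℤ_[p]) ∣ y2 := by
  classical
  have hres : (PadicInt.toZMod y0) ^ 2 - PadicInt.toZMod Δ * (PadicInt.toZMod y1) ^ 2 = 0 := by
    have := congrArg (PadicInt.toZMod (p := p)) heq
    simp only [map_add, map_sub, map_mul, map_pow, map_zero, map_natCast,
      ZMod.natCast_self, zero_mul, mul_zero, add_zero] at this
    convert this using 2
  have hy1 : PadicInt.toZMod y1 = 0 := by
    by_contra hy1ne
    apply hΔns
    have h10 : PadicInt.toZMod Δ = ((PadicInt.toZMod y0) * (PadicInt.toZMod y1)⁻¹) ^ 2 := by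
      field_simp
      linear_combination -hres
    set r : ℤ_[p] := ((((PadicInt.toZMod y0) * (PadicInt.toZMod y1)⁻¹) : ZMod p).val : ℤ_[p])
      with hr
    have hrz : PadicInt.toZMod r = (PadicInt.toZMod y0) * (PadicInt.toZMod y1)⁻¹ :=
      zmod_lift_toZMod _
    have hrunit : IsUnit r := by
      apply padic_unit_of_toZMod_ne_zero
      rw [hrz]
      intro h0
      rw [h0] at h10
      simp only [zero_pow, ne_eq, OfNat.ofNat_ne_zero, not_false_eq_true] at h10
      exact (hΔ.map (PadicInt.toZMod (p := p))).ne_zero h10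
    have : PadicInt.toZMod (r ^ 2) = PadicInt.toZMod Δ := by
      rw [map_pow, hrz, ← h10]
    exact padic_sqrt hp2 hrunit this
  have hy0 : PadicInt.toZMod y0 = 0 := by
    rw [hy1] at hres
    simp only [ne_eq, OfNat.ofNat_ne_zero, not_false_eq_true, zero_pow, mul_zero, sub_zero] at hres
    exact pow_eq_zero_iff (by norm_num) |>.mp hres
  have hd0 : (p : ℤ_[p]) ∣ y0 := (padic_toZMod_eq_zero_iff_dvd y0).mp hy0
  have hd1 : (p : ℤ_[p]) ∣ y1 := (padic_toZMod_eq_zero_iff_dvd y1).mp hy1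
  refine ⟨hd0, hd1, ?_⟩
  obtain ⟨c0, hc0⟩ := hd0
  obtain ⟨c1, hc1⟩ := hd1
  have hpne : (p : ℤ_[p]) ≠ 0 := Nat.cast_ne_zero.mpr (Fact.out : p.Prime).ne_zero
  have hfac : (p : ℤ_[p]) * ((p : ℤ_[p]) * c0 ^ 2 - (p : ℤ_[p]) * Δ * c1 ^ 2 + ε * y2 ^ 2) = 0 := by
    rw [hc0, hc1] at heq
    linear_combination heq
  have h2 : (p : ℤ_[p]) * c0 ^ 2 - (p : ℤ_[p]) * Δ * c1 ^ 2 + ε * y2 ^ 2 = 0 :=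
    (mul_eq_zero.mp hfac).resolve_left hpne
  have hy2 : PadicInt.toZMod y2 = 0 := by
    have := congrArg (PadicInt.toZMod (p := p)) h2
    simp only [map_add, map_sub, map_mul, map_pow, map_zero, map_natCast,
      ZMod.natCast_self, zero_mul, mul_zero, sub_zero, zero_sub, neg_zero, zero_add] at this
    have hεz : PadicInt.toZMod ε ≠ 0 := (hε.map (PadicInt.toZMod (p := p))).ne_zero
    have := mul_eq_zero.mp this
    rcases this with h | h
    · exact absurd h hεz
    · exact pow_eq_zero_iff (by norm_num) |>.mp h
  exact (padic_toZMod_eq_zero_iff_dvd y2).mp hy2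

lemma ref_anisotropic {p : ℕ} [Fact p.Prime] (hp2 : p ≠ 2) {Δ ε : ℤ_[p]}
    (hΔ : IsUnit Δ) (hΔns : ¬ ∃ t : ℤ_[p], t ^ 2 = Δ) (hε : IsUnit ε)
    {y0 y1 y2 : ℤ_[p]} (heq : y0 ^ 2 - Δ * y1 ^ 2 + (p : ℤ_[p]) * ε * y2 ^ 2 = 0) :
    y0 = 0 ∧ y1 = 0 ∧ y2 = 0 := by
  have hpne : (p : ℤ_[p]) ≠ 0 := Nat.cast_ne_zero.mpr (Fact.out : p.Prime).ne_zero
  have main : ∀ n : ℕ, (p : ℤ_[p]) ^ n ∣ y0 ∧ (p : ℤ_[p]) ^ n ∣ y1 ∧ (p : ℤ_[p]) ^ n ∣ y2 := by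
    intro n
    induction n with
    | zero => simp
    | succ n ih =>
      obtain ⟨⟨c0, hc0⟩, ⟨c1, hc1⟩, ⟨c2, hc2⟩⟩ := ih
      have hfac : ((p : ℤ_[p]) ^ n) ^ 2 *
          (c0 ^ 2 - Δ * c1 ^ 2 + (p : ℤ_[p]) * ε * c2 ^ 2) = 0 := by
        rw [hc0, hc1, hc2] at heq
        linear_combination heq
      have hc : c0 ^ 2 - Δ * c1 ^ 2 + (p : ℤ_[p]) * ε * c2 ^ 2 = 0 :=
        (mul_eq_zero.mp hfac).resolve_left (pow_ne_zero _ (pow_ne_zero _ hpne))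
      obtain ⟨hd0, hd1, hd2⟩ := step_dvd hp2 hΔ hΔns hε hc
      refine ⟨?_, ?_, ?_⟩
      · obtain ⟨e, he⟩ := hd0
        exact ⟨e, by rw [hc0, he, pow_succ]; ring⟩
      · obtain ⟨e, he⟩ := hd1
        exact ⟨e, by rw [hc1, he, pow_succ]; ring⟩
      · obtain ⟨e, he⟩ := hd2
        exact ⟨e, by rw [hc2, he, pow_succ]; ring⟩
  have key : ∀ y : ℤ_[p], (∀ n : ℕ, (p : ℤ_[p]) ^ n ∣ y) → y = 0 := by
    intro y hy
    by_contra hy0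
    have hpos : 0 < ‖y‖ := norm_pos_iff.mpr hy0
    have hplt : (1 : ℝ) / p < 1 := by
      have : (1 : ℝ) < p := by
        exact_mod_cast (Fact.out : p.Prime).one_lt
      rw [div_lt_one (by linarith)]
      linarith
    obtain ⟨n, hn⟩ := exists_pow_lt_of_lt_one hpos hplt
    obtain ⟨e, he⟩ := hy n
    have : ‖y‖ ≤ ((1:ℝ) / p) ^ n := by
      rw [he]
      calc ‖(p : ℤ_[p]) ^ n * e‖ = ‖(p : ℤ_[p])‖ ^ n * ‖e‖ := by
            rw [norm_mul, norm_pow]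
        _ ≤ ‖(p : ℤ_[p])‖ ^ n * 1 := by
            gcongr
            exact PadicInt.norm_le_one e
        _ = ((1:ℝ) / p) ^ n := by
            rw [mul_one, PadicInt.norm_p]
            norm_num
    linarith
  exact ⟨key y0 fun n => (main n).1, key y1 fun n => (main n).2.1,
    key y2 fun n => (main n).2.2⟩

lemma case2_anisotropic {p : ℕ} [Fact p.Prime] (hp2 : p ≠ 2) {a b c : ℤ} {Δ ε : ℤ_[p]}
    (hΔ : IsUnit Δ) (hΔns : ¬ ∃ t : ℤ_[p], t ^ 2 = Δ) (hε : IsUnit ε)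
    {U : Matrix (Fin 3) (Fin 3) ℤ_[p]} (hdet : IsUnit U.det)
    (hU : ∀ x : Fin 3 → ℤ_[p],
        Qdiag a b c (U.mulVec x) = x 0 ^ 2 - Δ * x 1 ^ 2 + (p : ℤ_[p]) * ε * x 2 ^ 2)
    (v : Fin 3 → ℤ_[p]) (hv : Qdiag a b c v = 0) : v = 0 := by
  obtain ⟨x, hUx⟩ : ∃ x : Fin 3 → ℤ_[p], U.mulVec x = v :=
    ⟨(U⁻¹).mulVec v, by
      rw [Matrix.mulVec_mulVec, Matrix.mul_nonsing_inv U hdet, Matrix.one_mulVec]⟩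
  have heq : x 0 ^ 2 - Δ * x 1 ^ 2 + (p : ℤ_[p]) * ε * x 2 ^ 2 = 0 := by
    rw [← hU x, hUx, hv]
  obtain ⟨h0, h1, h2⟩ := ref_anisotropic hp2 hΔ hΔns hε heq
  have hx0 : x = 0 := by
    funext i
    fin_cases i <;> assumption
  rw [← hUx, hx0, Matrix.mulVec_zero]

/-- Every prime `q ≡ α (mod 8)` outside `T` is represented over `ℤ`. -/
lemma rep_prime (a b c : ℤ)
    (hst : Stable a b c) (hreg : OddRegular a b c)
    (T : Finset ℕ)
    (hT : ∀ p : ℕ, p ∈ T ↔ ∃ hp : p.Prime, p ≠ 2 ∧ AnisotropicAt p hp a b c)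
    (α : ℕ) (hα : α = 1 ∨ α = 3 ∨ α = 5 ∨ α = 7)
    (hα2 : ∀ n : ℕ, ReprAt 2 Nat.prime_two a b c (8 * (n : ℤ) + (α : ℤ)))
    (q : ℕ) (hq : q.Prime) (hqα : q % 8 = α) (hqT : q ∉ T) :
    ReprZ a b c (q : ℤ) := by
  have hq2 : q ≠ 2 := by
    intro h
    rw [h] at hqα
    rcases hα with h'|h'|h'|h' <;> omega
  have hqodd : Odd q := hq.odd_of_ne_two hq2
  apply hreg
  · exact_mod_cast hq.pos
  · exact_mod_cast hqodd
  intro p hp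
  by_cases hp2 : p = 2
  · subst hp2
    have hval : 8 * ((q / 8 : ℕ) : ℤ) + (α : ℤ) = (q : ℤ) := by
      have := Nat.div_add_mod q 8
      rw [hqα] at this
      exact_mod_cast this
    rw [show ((q : ℤ)) = 8 * ((q / 8 : ℕ) : ℤ) + (α : ℤ) from hval.symm]
    exact hα2 (q / 8)
  · letI : Fact p.Prime := ⟨hp⟩
    rcases hst p hp hp2 with hcase1 | hcase2
    · exact case1_repr hp2 hcase1 _
    · obtain ⟨Δ, ε, hΔ, hΔns, hε, U, hdet, hU⟩ := hcase2
      by_cases hpq : p = q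
      · exfalso
        apply hqT
        rw [hT q]
        subst hpq
        exact ⟨hp, hp2, fun v hv => case2_anisotropic hp2 hΔ hΔns hε hdet hU v hv⟩
      · have hun : IsUnit ((q : ℤ) : ℤ_[p]) := by
          have : ¬ p ∣ q := by
            intro hdvd
            exact hpq ((Nat.prime_dvd_prime_iff_eq hp hq).mp hdvd)
          have := padic_natCast_unit (p := p) q this
          exact_mod_cast this
        exact case2_repr hp2 hΔ hε hU hun

/-- If `a * x ^ 2` equals a prime `Q` with `a > 0`, then `a = Q`. -/
lemma prime_eq_of_mul_sq {a : ℤ} (ha : 0 < a) {Q : ℕ} (hQ : Q.Prime) {x : ℤ}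
    (h : a * x ^ 2 = (Q : ℤ)) : a = (Q : ℤ) := by
  have hnat : a.natAbs * x.natAbs ^ 2 = Q := by
    have := congrArg Int.natAbs h
    rwa [Int.natAbs_mul, Int.natAbs_pow, Int.natAbs_natCast] at this
  have hx0 : x.natAbs ≠ 0 := by
    intro h0
    rw [h0] at hnat
    simp at hnat
    exact hQ.ne_zero hnat.symm
  have hdvd : x.natAbs ^ 2 ∣ Q := ⟨a.natAbs, by rw [← hnat]; ring⟩
  rcases hQ.eq_one_or_self_of_dvd _ hdvd with h1 | h1
  · have : a.natAbs = Q := by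
      rw [h1, mul_one] at hnat
      exact hnat
    have ha' : a = a.natAbs := (Int.natAbs_of_nonneg ha.le).symm
    rw [ha', this]
  · exfalso
    have hxd : x.natAbs ∣ Q := dvd_trans (dvd_pow_self _ (by norm_num)) hdvd
    rcases hQ.eq_one_or_self_of_dvd _ hxd with h2 | h2
    · rw [h2] at h1
      simp at h1
      exact hQ.one_lt.ne' h1.symm
    · rw [h2] at h1
      have : Q * Q = Q * 1 := by
        rw [mul_one]
        calc Q * Q = Q ^ 2 := by ring
          _ = Q := h1
      have := Nat.eq_of_mul_eq_mul_left hQ.pos this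
      exact hQ.one_lt.ne' this

theorem stmt15 (a b c : ℤ) (ha : 0 < a) (hab : a ≤ b) (hbc : b ≤ c)
    (hprim : Int.gcd a (Int.gcd b c) = 1)
    (hst : Stable a b c) (hreg : OddRegular a b c)
    (T : Finset ℕ)
    (hT : ∀ p : ℕ, p ∈ T ↔ ∃ hp : p.Prime, p ≠ 2 ∧ AnisotropicAt p hp a b c)
    (α : ℕ) (hα : α = 1 ∨ α = 3 ∨ α = 5 ∨ α = 7)
    (hα2 : ∀ n : ℕ, ReprAt 2 Nat.prime_two a b c (8 * (n : ℤ) + (α : ℤ)))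
    (h : ℕ) (hh : (T.filter fun p => p % 8 = α).card ≤ h) :
    (∀ s : ℕ, h < s →
      s - h ≤ {k : ℕ | 1 ≤ k ∧ k ≤ s ∧ ReprZ a b c (q8 α k : ℤ)}.ncard) ∧
    (a ≤ (q8 α (h + 1) : ℤ) ∧ b ≤ (q8 α (h + 2) : ℤ)) ∧
    (a = 1 → b ≤ (q8 α (h + 1) : ℤ)) ∧
    (∀ s : ℕ,
      (∀ i j : ℤ, 1 ≤ i → i ≤ (q8 α (h + 1) : ℤ) → i ≤ j → j ≤ (q8 α (h + 2) : ℤ) →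
        ¬ P8Univ α i j →
        {k : ℕ | 1 ≤ k ∧ k ≤ s ∧ ∃ x y : ℤ, i * x ^ 2 + j * y ^ 2 = (q8 α k : ℤ)}.ncard
          < s - h) →
      P8Univ α a b ∨ c ≤ (q8 α s : ℤ)) := by
  classical
  have hb : (0:ℤ) < b := lt_of_lt_of_le ha hab
  have hc : (0:ℤ) < c := lt_of_lt_of_le hb hbc
  have hαlt : α < 8 := by rcases hα with h'|h'|h'|h' <;> omega
  have hunit : IsUnit ((α : ℕ) : ZMod 8) := by
    rcases hα with h'|h'|h'|h' <;> subst h' <;> decide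
  have Hinf : {r : ℕ | r.Prime ∧ r % 8 = α}.Infinite := by
    have h1 := Nat.infinite_setOfPred_prime_and_eq_mod (q := 8) hunit
    have heq : {r : ℕ | r.Prime ∧ (r : ZMod 8) = ((α : ℕ) : ZMod 8)}
        = {r : ℕ | r.Prime ∧ r % 8 = α} := by
      ext r
      simp only [Set.mem_setOf_eq, and_congr_right_iff]
      intro _
      rw [ZMod.natCast_eq_natCast_iff', Nat.mod_eq_of_lt hαlt]
    rwa [heq] at h1
  have hq8 : ∀ k : ℕ, (q8 α k).Prime ∧ q8 α k % 8 = α := fun k =>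
    Nat.nth_mem_of_infinite Hinf _
  have hq8mono : ∀ k l : ℕ, k ≤ l → q8 α k ≤ q8 α l := by
    intro k l hkl
    exact Nat.nth_monotone Hinf (Nat.sub_le_sub_right hkl 1)
  have hq8inj : ∀ k l : ℕ, 1 ≤ k → 1 ≤ l → q8 α k = q8 α l → k = l := by
    intro k l hk hl he
    have := Nat.nth_injective Hinf he
    omega
  -- part (i)
  have key1 : ∀ s : ℕ, h < s →
      (s - h : ℕ) ≤ {k : ℕ | 1 ≤ k ∧ k ≤ s ∧ ReprZ a b c (q8 α k : ℤ)}.ncard := by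
    intro s hs
    set G : Finset ℕ := (Finset.Icc 1 s).filter (fun k => ReprZ a b c (q8 α k : ℤ)) with hG
    have hset : {k : ℕ | 1 ≤ k ∧ k ≤ s ∧ ReprZ a b c (q8 α k : ℤ)} = ↑G := by
      ext k
      simp [hG, Finset.mem_filter, Finset.mem_Icc, and_assoc]
    rw [hset, Set.ncard_coe_finset]
    set Good : Finset ℕ := (Finset.Icc 1 s).filter (fun k => q8 α k ∉ T) with hGood
    have hGoodsub : Good ⊆ G := by
      intro k hk
      rw [hGood, Finset.mem_filter] at hk
      rw [hG, Finset.mem_filter]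
      exact ⟨hk.1, rep_prime a b c hst hreg T hT α hα hα2 _ (hq8 k).1 (hq8 k).2 hk.2⟩
    have hBadcard : ((Finset.Icc 1 s).filter (fun k => q8 α k ∈ T)).card ≤ h := by
      refine le_trans ?_ hh
      apply Finset.card_le_card_of_injOn (fun k => q8 α k)
      · intro k hk
        rw [Finset.mem_coe, Finset.mem_filter] at hk ⊢
        exact ⟨hk.2, (hq8 k).2⟩
      · intro k1 h1 k2 h2 he
        simp only [Finset.coe_filter, Set.mem_setOf_eq, Finset.mem_Icc] at h1 h2
        exact hq8inj _ _ h1.1.1 h2.1.1 he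
    have hsplit := Finset.card_filter_add_card_filter_not
      (s := Finset.Icc 1 s) (p := fun k => q8 α k ∈ T)
    have hIcc : (Finset.Icc 1 s).card = s := by rw [Nat.card_Icc]; omega
    rw [hIcc] at hsplit
    have hGoodcard : s - h ≤ Good.card := by
      rw [hGood]
      omega
    exact le_trans hGoodcard (Finset.card_le_card hGoodsub)
  have sq1 : ∀ w : ℤ, w ≠ 0 → 1 ≤ w ^ 2 := by
    intro w hw
    nlinarith [sq_abs w, Int.one_le_abs hw]
  have hbound : ∀ (P : ℕ) (x y z : ℤ), P.Prime → a * x ^ 2 + b * y ^ 2 + c * z ^ 2 = (P : ℤ) →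
      a ≤ (P : ℤ) ∧ ((y ≠ 0 ∨ z ≠ 0) → b ≤ (P : ℤ)) ∧ (z ≠ 0 → c ≤ (P : ℤ)) := by
    intro P x y z hP heq
    have hP0 : (0:ℤ) < P := by exact_mod_cast hP.pos
    refine ⟨?_, ?_, ?_⟩
    · by_cases hx : x = 0
      · by_cases hy : y = 0
        · by_cases hz : z = 0
          · rw [hx, hy, hz] at heq
            simp at heq
            omega
          · have := sq1 z hz
            nlinarith [sq_nonneg x, sq_nonneg y]
        · have := sq1 y hy
          nlinarith [sq_nonneg x, sq_nonneg z]
      · have := sq1 x hx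
        nlinarith [sq_nonneg y, sq_nonneg z]
    · rintro (hy | hz)
      · have := sq1 y hy
        nlinarith [sq_nonneg x, sq_nonneg z]
      · have := sq1 z hz
        nlinarith [sq_nonneg x, sq_nonneg y]
    · intro hz
      have := sq1 z hz
      nlinarith [sq_nonneg x, sq_nonneg y]
  have exrep : ∀ m : ℕ, h < m → ∃ k, 1 ≤ k ∧ k ≤ m ∧ ReprZ a b c (q8 α k : ℤ) := by
    intro m hm
    have h1 := key1 m hm
    have hne : {k | 1 ≤ k ∧ k ≤ m ∧ ReprZ a b c (q8 α k : ℤ)}.Nonempty := by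
      apply Set.nonempty_of_ncard_ne_zero
      omega
    obtain ⟨k, hk⟩ := hne
    exact ⟨k, hk.1, hk.2.1, hk.2.2⟩
  have part2a : a ≤ (q8 α (h + 1) : ℤ) := by
    obtain ⟨k, hk1, hk2, x, y, z, hxyz⟩ := exrep (h + 1) (by omega)
    have hb1 := (hbound _ x y z (hq8 k).1 hxyz).1
    have hmono : (q8 α k : ℤ) ≤ (q8 α (h + 1) : ℤ) := by
      exact_mod_cast hq8mono k (h + 1) hk2
    linarith
  have part2b : b ≤ (q8 α (h + 2) : ℤ) := by
    have h2 : 1 < {k | 1 ≤ k ∧ k ≤ h + 2 ∧ ReprZ a b c (q8 α k : ℤ)}.ncard := by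
      have := key1 (h + 2) (by omega)
      omega
    have hfin : {k | 1 ≤ k ∧ k ≤ h + 2 ∧ ReprZ a b c (q8 α k : ℤ)}.Finite :=
      (Set.finite_Icc 1 (h + 2)).subset (fun k hk => Set.mem_Icc.mpr ⟨hk.1, hk.2.1⟩)
    obtain ⟨k1, k2, hk1, hk2, hkne⟩ := (Set.one_lt_ncard_iff hfin).mp h2
    obtain ⟨x1, y1, z1, he1⟩ := hk1.2.2
    obtain ⟨x2, y2, z2, he2⟩ := hk2.2.2
    have hmono1 : (q8 α k1 : ℤ) ≤ (q8 α (h + 2) : ℤ) := by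
      exact_mod_cast hq8mono k1 (h + 2) hk1.2.1
    have hmono2 : (q8 α k2 : ℤ) ≤ (q8 α (h + 2) : ℤ) := by
      exact_mod_cast hq8mono k2 (h + 2) hk2.2.1
    by_cases hyz1 : y1 = 0 ∧ z1 = 0
    · by_cases hyz2 : y2 = 0 ∧ z2 = 0
      · exfalso
        rw [hyz1.1, hyz1.2] at he1
        rw [hyz2.1, hyz2.2] at he2
        have ha1 : a = (q8 α k1 : ℤ) := prime_eq_of_mul_sq ha (hq8 k1).1 (x := x1)
          (by linear_combination he1)
        have ha2 : a = (q8 α k2 : ℤ) := prime_eq_of_mul_sq ha (hq8 k2).1 (x := x2)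
          (by linear_combination he2)
        have : q8 α k1 = q8 α k2 := by
          have := ha1.symm.trans ha2
          exact_mod_cast this
        exact hkne (hq8inj _ _ hk1.1 hk2.1 this)
      · have := (hbound _ x2 y2 z2 (hq8 k2).1 he2).2.1 (not_and_or.mp hyz2)
        linarith
    · have := (hbound _ x1 y1 z1 (hq8 k1).1 he1).2.1 (not_and_or.mp hyz1)
      linarith
  have part3 : a = 1 → b ≤ (q8 α (h + 1) : ℤ) := by
    intro ha1
    obtain ⟨k, hk1, hk2, x, y, z, hxyz⟩ := exrep (h + 1) (by omega)
    have hmono : (q8 α k : ℤ) ≤ (q8 α (h + 1) : ℤ) := by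
      exact_mod_cast hq8mono k (h + 1) hk2
    by_cases hyz : y = 0 ∧ z = 0
    · exfalso
      rw [hyz.1, hyz.2] at hxyz
      have heq1 : a = (q8 α k : ℤ) := prime_eq_of_mul_sq ha (hq8 k).1 (x := x)
        (by linear_combination hxyz)
      rw [ha1] at heq1
      have hge : 2 ≤ q8 α k := (hq8 k).1.two_le
      omega
    · have := (hbound _ x y z (hq8 k).1 hxyz).2.1 (not_and_or.mp hyz)
      linarith
  refine ⟨key1, ⟨part2a, part2b⟩, part3, ?_⟩
  intro s Hs
  by_cases hPU : P8Univ α a b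
  · exact Or.inl hPU
  right
  have hbin := Hs a b (by linarith) part2a hab part2b hPU
  have hhs : h < s := by omega
  have hter := key1 s hhs
  have hbinfin : {k : ℕ | 1 ≤ k ∧ k ≤ s ∧
      ∃ x y : ℤ, a * x ^ 2 + b * y ^ 2 = (q8 α k : ℤ)}.Finite :=
    (Set.finite_Icc 1 s).subset (fun k hk => Set.mem_Icc.mpr ⟨hk.1, hk.2.1⟩)
  have hnsub : ¬ ({k : ℕ | 1 ≤ k ∧ k ≤ s ∧ ReprZ a b c (q8 α k : ℤ)} ⊆
      {k : ℕ | 1 ≤ k ∧ k ≤ s ∧ ∃ x y : ℤ, a * x ^ 2 + b * y ^ 2 = (q8 α k : ℤ)}) := by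
    intro hsub
    have := Set.ncard_le_ncard hsub hbinfin
    omega
  obtain ⟨k, hkT, hkB⟩ := Set.not_subset.mp hnsub
  obtain ⟨hk1, hk2, x, y, z, hxyz⟩ := hkT
  have hz : z ≠ 0 := by
    intro hz0
    apply hkB
    exact ⟨hk1, hk2, x, y, by linear_combination hxyz - c * z * hz0⟩
  have hc2 := (hbound _ x y z (hq8 k).1 hxyz).2.2 hz
  have hmono : (q8 α k : ℤ) ≤ (q8 α s : ℤ) := by
    exact_mod_cast hq8mono k s hk2
  linarith
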